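/- For every ε > 0 and integer k ≥ 1 there exist δ > 0 and an integer k' ≥ 1 such that for any two P-variables W and U, if d_H(S'_{k'}(W), S'_{k'}(U)) ≤ δ then d_H(S_k(W), S_k(U)) ≤ ε. -/

import Mathlib

set_option autoImplicit false

open MeasureTheory Set
open scoped ENNReal NNReal

noncomputable section

/-- `ℝ^n` with the Euclidean metric. -/
abbrev RE (n : ℕ) : Type := EuclideanSpace ℝ (Fin n)

/-- The random vector `(f₁(x₁), f₁(x₂), …, f_k(x₁), f_k(x₂), W(x₁,x₂,x₁₂))`. -/
def sVec {Ω₁ Ω₂ : Type*} (k : ℕ) (f : Fin k → Ω₁ → ℝ)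
    (W : Ω₁ × Ω₁ × Ω₂ → ℝ) (x : Ω₁ × Ω₁ × Ω₂) : RE (2 * k + 1) :=
  (WithLp.equiv 2 (Fin (2 * k + 1) → ℝ)).symm fun i =>
    if _ : (i : ℕ) < 2 * k then
      if (i : ℕ) % 2 = 0 then f ⟨(i : ℕ) / 2, by omega⟩ x.1
      else f ⟨(i : ℕ) / 2, by omega⟩ x.2.1
    else W x

/-- `S(f₁,…,f_k,W)`: the pushforward of the product measure `P₁ ⊗ P₁ ⊗ P₂` under `sVec`. -/
def Smeasure {Ω₁ Ω₂ : Type*} [MeasurableSpace Ω₁] [MeasurableSpace Ω₂]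
    (P₁ : Measure Ω₁) (P₂ : Measure Ω₂) {k : ℕ} (f : Fin k → Ω₁ → ℝ)
    (W : Ω₁ × Ω₁ × Ω₂ → ℝ) : Measure (RE (2 * k + 1)) :=
  (P₁.prod (P₁.prod P₂)).map (sVec k f W)

/-- The `k`-profile `S_k(W)`. -/
def SkSet {Ω₁ Ω₂ : Type*} [MeasurableSpace Ω₁] [MeasurableSpace Ω₂]
    (P₁ : Measure Ω₁) (P₂ : Measure Ω₂) (k : ℕ)
    (W : Ω₁ × Ω₁ × Ω₂ → ℝ) : Set (Measure (RE (2 * k + 1))) :=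
  {μ | ∃ f : Fin k → Ω₁ → ℝ, (∀ i, Measurable (f i)) ∧
    (∀ i x, f i x ∈ Icc (-1 : ℝ) 1) ∧ μ = Smeasure P₁ P₂ f W}

/-- A function partition: `{0,1}`-valued measurable functions summing to `1`. -/
def IsFunctionPartition {Ω₁ : Type*} [MeasurableSpace Ω₁] {k : ℕ}
    (f : Fin k → Ω₁ → ℝ) : Prop :=
  (∀ i, Measurable (f i)) ∧ (∀ i x, f i x = 0 ∨ f i x = 1) ∧ ∀ x, ∑ i, f i x = 1

/-- The restricted `k`-profile `S'_k(W)`. -/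
def SkSet' {Ω₁ Ω₂ : Type*} [MeasurableSpace Ω₁] [MeasurableSpace Ω₂]
    (P₁ : Measure Ω₁) (P₂ : Measure Ω₂) (k : ℕ)
    (W : Ω₁ × Ω₁ × Ω₂ → ℝ) : Set (Measure (RE (2 * k + 1))) :=
  {μ | ∃ f : Fin k → Ω₁ → ℝ, IsFunctionPartition f ∧ μ = Smeasure P₁ P₂ f W}

/-- Hausdorff edistance (w.r.t. the Lévy–Prokhorov distance) between sets of measures. -/
def eHausLP {X : Type*} [MeasurableSpace X] [PseudoEMetricSpace X]
    (A B : Set (Measure X)) : ℝ≥0∞ :=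
  max (⨆ μ ∈ A, ⨅ ν ∈ B, levyProkhorovEDist μ ν)
      (⨆ ν ∈ B, ⨅ μ ∈ A, levyProkhorovEDist μ ν)

/-- Hausdorff distance (w.r.t. the Lévy–Prokhorov distance) between sets of measures. -/
def dHLP {X : Type*} [MeasurableSpace X] [PseudoEMetricSpace X]
    (A B : Set (Measure X)) : ℝ := (eHausLP A B).toReal

/-- A `P`-variable: a measurable real-valued function on a product `Ω₁ × Ω₁ × Ω₂`
of probability spaces. -/
structure PVar where
  (Ω₁ : Type*)
  (Ω₂ : Type*)
  [m₁ : MeasurableSpace Ω₁]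
  [m₂ : MeasurableSpace Ω₂]
  (P₁ : Measure Ω₁)
  (P₂ : Measure Ω₂)
  (prob₁ : IsProbabilityMeasure P₁)
  (prob₂ : IsProbabilityMeasure P₂)
  (W : Ω₁ × Ω₁ × Ω₂ → ℝ)
  (meas : Measurable W)

attribute [instance] PVar.m₁ PVar.m₂

/-- The underlying product probability measure of a `P`-variable. -/
def PVar.vol (V : PVar) : Measure (V.Ω₁ × V.Ω₁ × V.Ω₂) := V.P₁.prod (V.P₁.prod V.P₂)

/-- The `k`-profile of a `P`-variable. -/
def PVar.Sk (V : PVar) (k : ℕ) : Set (Measure (RE (2 * k + 1))) := SkSet V.P₁ V.P₂ k V.W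

/-- The restricted `k`-profile of a `P`-variable. -/
def PVar.Sk' (V : PVar) (k : ℕ) : Set (Measure (RE (2 * k + 1))) := SkSet' V.P₁ V.P₂ k V.W

/-- The `P`-variables metric `d_M`. -/
def dM (V U : PVar) : ℝ :=
  ∑' k : ℕ, (2 : ℝ)⁻¹ ^ (k + 1) * dHLP (V.Sk (k + 1)) (U.Sk (k + 1))

universe u₁ u₂ u₃ u₄

/-!
Round every test function `f_j` to the grid `-1 + 2a/m`. The joint rounding cells form a function
partition `g` with `(m + 1) ^ k` parts, and the statistics vector of the rounded functions is the
image of that of `g` under a linear map `T` depending only on `k` and `m`. Hence each element of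
`S_k(W)` lies within `O(√k / m)` of `T_* S'_{k'}(W)`, while `T_*` maps `S'_{k'}(U)` into
`S_k(U)` and multiplies Lévy–Prokhorov distances by at most `max 1 ‖T‖`. This gives
`d_H(S_k(W), S_k(U)) ≤ O(√k / m) + max 1 ‖T‖ · d_H(S'_{k'}(W), S'_{k'}(U))`.
-/

section LevyProkhorov

variable {X Y : Type*} [MeasurableSpace X] [PseudoEMetricSpace X]
  [MeasurableSpace Y] [PseudoEMetricSpace Y]

lemma levyProkhorovEDist_map_le_of_edist_le [OpensMeasurableSpace Y] {α : Type*}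
    [MeasurableSpace α] (μ : Measure α)
    {φ ψ : α → Y} (hφ : Measurable φ) (hψ : Measurable ψ) {c : ℝ≥0∞}
    (h : ∀ a, edist (φ a) (ψ a) ≤ c) :
    levyProkhorovEDist (μ.map φ) (μ.map ψ) ≤ c := by
  have key : ∀ {φ ψ : α → Y}, Measurable φ → Measurable ψ → (∀ a, edist (φ a) (ψ a) ≤ c) →
      ∀ ε B, c < ε → ε < ∞ → MeasurableSet B →
        μ.map φ B ≤ μ.map ψ (Metric.thickening ε.toReal B) + ε := by
    intro φ ψ hφ hψ h ε B hε hε_top hB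
    rw [Measure.map_apply hφ hB, Measure.map_apply hψ Metric.isOpen_thickening.measurableSet]
    refine (measure_mono fun a ha => ?_).trans le_self_add
    rw [Set.mem_preimage, Metric.mem_thickening_iff_exists_edist_lt]
    refine ⟨φ a, ha, ?_⟩
    rw [edist_comm, ENNReal.ofReal_toReal hε_top.ne]
    exact (h a).trans_lt hε
  exact levyProkhorovEDist_le_of_forall _ _ _ fun ε B hε hε_top hB =>
    ⟨key hφ hψ h ε B hε hε_top hB,
      key hψ hφ (fun a => by rw [edist_comm]; exact h a) ε B hε hε_top hB⟩

variable [OpensMeasurableSpace X] [BorelSpace Y]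

lemma LipschitzWith.levyProkhorovEDist_map_le {T : X → Y} {L : ℝ≥0} (hT : LipschitzWith L T)
    (hL : 1 ≤ L) (μ ν : Measure X) :
    levyProkhorovEDist (μ.map T) (ν.map T) ≤ L * levyProkhorovEDist μ ν := by
  have hT_meas : Measurable T := hT.continuous.measurable
  have hL₀ : (L : ℝ≥0∞) ≠ 0 := by positivity
  refine levyProkhorovEDist_le_of_forall _ _ _ fun ε B hε hε_top hB => ?_
  set ε' := ε / L
  have hε' : levyProkhorovEDist μ ν < ε' := by
    rwa [ENNReal.lt_div_iff_mul_lt (.inl hL₀) (.inl ENNReal.coe_ne_top), mul_comm]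
  have hε'_le : ε' ≤ ε :=
    ENNReal.div_le_of_le_mul (le_mul_of_one_le_right zero_le (by exact_mod_cast hL))
  have h_thick : Metric.thickening ε'.toReal (T ⁻¹' B) ⊆ T ⁻¹' Metric.thickening ε.toReal B := by
    intro x hx
    rw [Metric.mem_thickening_iff_exists_edist_lt, ENNReal.ofReal_toReal
      (hε'_le.trans_lt hε_top).ne] at hx
    obtain ⟨z, hz, hxz⟩ := hx
    rw [Set.mem_preimage, Metric.mem_thickening_iff_exists_edist_lt,
      ENNReal.ofReal_toReal hε_top.ne]
    refine ⟨T z, hz, (hT.edist_le_mul x z).trans_lt ?_⟩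
    calc (L : ℝ≥0∞) * edist x z < L * ε' :=
          ENNReal.mul_lt_mul_right hL₀ ENNReal.coe_ne_top hxz
      _ = ε := ENNReal.mul_div_cancel hL₀ ENNReal.coe_ne_top
  have h_thick_meas := Metric.isOpen_thickening (δ := ε.toReal) (E := B).measurableSet
  rw [Measure.map_apply hT_meas hB, Measure.map_apply hT_meas h_thick_meas,
    Measure.map_apply hT_meas hB, Measure.map_apply hT_meas h_thick_meas]
  exact ⟨(left_measure_le_of_levyProkhorovEDist_lt hε' (hT_meas hB)).trans
      (add_le_add (measure_mono h_thick) hε'_le),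
    (right_measure_le_of_levyProkhorovEDist_lt hε' (hT_meas hB)).trans
      (add_le_add (measure_mono h_thick) hε'_le)⟩

end LevyProkhorov

section Hausdorff

variable {X Y : Type*} [MeasurableSpace X] [PseudoEMetricSpace X]
  [MeasurableSpace Y] [PseudoEMetricSpace Y]

lemma eHausLP_eq_max (A B : Set (Measure Y)) :
    eHausLP A B = max (⨆ μ ∈ A, ⨅ ν ∈ B, levyProkhorovEDist μ ν)
      (⨆ ν ∈ B, ⨅ μ ∈ A, levyProkhorovEDist ν μ) := by
  simp only [eHausLP, levyProkhorovEDist_comm]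

lemma eHausLP_le_one {A B : Set (Measure Y)} (hA : A.Nonempty) (hB : B.Nonempty)
    (hA₁ : ∀ μ ∈ A, IsProbabilityMeasure μ) (hB₁ : ∀ ν ∈ B, IsProbabilityMeasure ν) :
    eHausLP A B ≤ 1 := by
  have h_le_one : ∀ μ ∈ A, ∀ ν ∈ B, levyProkhorovEDist μ ν ≤ 1 := fun μ hμ ν hν => by
    simpa [(hA₁ μ hμ).measure_univ, (hB₁ ν hν).measure_univ] using
      levyProkhorovEDist_le_max_measure_univ μ ν
  obtain ⟨μ₀, hμ₀⟩ := hA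
  obtain ⟨ν₀, hν₀⟩ := hB
  exact max_le (iSup₂_le fun μ hμ => (biInf_le _ hν₀).trans (h_le_one μ hμ ν₀ hν₀))
    (iSup₂_le fun ν hν => (biInf_le _ hμ₀).trans (h_le_one μ₀ hμ₀ ν hν))

variable [OpensMeasurableSpace X] [BorelSpace Y] {T : X → Y} {L : ℝ≥0} {r : ℝ≥0∞}

lemma biSup_biInf_levyProkhorovEDist_le_of_map (hT : LipschitzWith L T) (hL : 1 ≤ L)
    {A B : Set (Measure Y)} {A' B' : Set (Measure X)}
    (hA : ∀ μ ∈ A, ∃ μ' ∈ A', levyProkhorovEDist μ (μ'.map T) ≤ r)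
    (hB : ∀ ν' ∈ B', ν'.map T ∈ B) :
    ⨆ μ ∈ A, ⨅ ν ∈ B, levyProkhorovEDist μ ν ≤
      r + L * ⨆ μ' ∈ A', ⨅ ν' ∈ B', levyProkhorovEDist μ' ν' := by
  have hL₀ : (L : ℝ≥0∞) ≠ 0 := by positivity
  refine iSup₂_le fun μ hμ => ?_
  obtain ⟨μ', hμ', hμμ'⟩ := hA μ hμ
  calc ⨅ ν ∈ B, levyProkhorovEDist μ ν
      ≤ ⨅ ν' ∈ B', (r + L * levyProkhorovEDist μ' ν') := by
        refine le_iInf₂ fun ν' hν' => (biInf_le _ (hB ν' hν')).trans ?_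
        calc levyProkhorovEDist μ (ν'.map T)
            ≤ levyProkhorovEDist μ (μ'.map T) + levyProkhorovEDist (μ'.map T) (ν'.map T) :=
              levyProkhorovEDist_triangle _ _ _
          _ ≤ r + L * levyProkhorovEDist μ' ν' :=
              add_le_add hμμ' (hT.levyProkhorovEDist_map_le hL μ' ν')
    _ = r + L * ⨅ ν' ∈ B', levyProkhorovEDist μ' ν' := by
        simp_rw [ENNReal.mul_iInf_of_ne hL₀ ENNReal.coe_ne_top, ENNReal.add_iInf]
    _ ≤ r + L * ⨆ μ' ∈ A', ⨅ ν' ∈ B', levyProkhorovEDist μ' ν' := by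
        gcongr
        exact le_iSup₂ (f := fun μ' _ => ⨅ ν' ∈ B', levyProkhorovEDist μ' ν') μ' hμ'

lemma eHausLP_le_of_map (hT : LipschitzWith L T) (hL : 1 ≤ L)
    {A B : Set (Measure Y)} {A' B' : Set (Measure X)}
    (hA : ∀ μ ∈ A, ∃ μ' ∈ A', levyProkhorovEDist μ (μ'.map T) ≤ r)
    (hB : ∀ ν ∈ B, ∃ ν' ∈ B', levyProkhorovEDist ν (ν'.map T) ≤ r)
    (hA' : ∀ μ' ∈ A', μ'.map T ∈ A) (hB' : ∀ ν' ∈ B', ν'.map T ∈ B) :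
    eHausLP A B ≤ r + L * eHausLP A' B' := by
  rw [eHausLP_eq_max, eHausLP_eq_max]
  exact max_le
    ((biSup_biInf_levyProkhorovEDist_le_of_map hT hL hA hB').trans
      (by gcongr; exact le_max_left _ _))
    ((biSup_biInf_levyProkhorovEDist_le_of_map hT hL hB hA').trans
      (by gcongr; exact le_max_right _ _))

end Hausdorff

lemma EuclideanSpace.dist_le_sqrt_card_mul {ι : Type*} [Fintype ι] {x y : EuclideanSpace ℝ ι}
    {c : ℝ} (hc : 0 ≤ c) (h : ∀ i, dist (x i) (y i) ≤ c) :
    dist x y ≤ √(Fintype.card ι) * c := by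
  rw [EuclideanSpace.dist_eq, ← Real.sqrt_sq hc, ← Real.sqrt_mul (Nat.cast_nonneg _)]
  gcongr
  calc ∑ i, dist (x i) (y i) ^ 2 ≤ ∑ _i : ι, c ^ 2 := by gcongr with i; exact h i
    _ = Fintype.card ι * c ^ 2 := by simp

section SVec

variable {Ω₁ Ω₂ : Type*}

lemma sVec_apply (k : ℕ) (f : Fin k → Ω₁ → ℝ) (W : Ω₁ × Ω₁ × Ω₂ → ℝ)
    (x : Ω₁ × Ω₁ × Ω₂) (i : Fin (2 * k + 1)) :
    sVec k f W x i =
      if _ : (i : ℕ) < 2 * k then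
        if (i : ℕ) % 2 = 0 then f ⟨(i : ℕ) / 2, by omega⟩ x.1
        else f ⟨(i : ℕ) / 2, by omega⟩ x.2.1
      else W x := rfl

lemma sVec_apply_even {n : ℕ} (g : Fin n → Ω₁ → ℝ) (W : Ω₁ × Ω₁ × Ω₂ → ℝ)
    (x : Ω₁ × Ω₁ × Ω₂) (b : Fin n) : sVec n g W x ⟨2 * b, by omega⟩ = g b x.1 := by
  simp [sVec]

lemma sVec_apply_odd {n : ℕ} (g : Fin n → Ω₁ → ℝ) (W : Ω₁ × Ω₁ × Ω₂ → ℝ)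
    (x : Ω₁ × Ω₁ × Ω₂) (b : Fin n) : sVec n g W x ⟨2 * b + 1, by omega⟩ = g b x.2.1 := by
  have h_lt : 2 * (b : ℕ) + 1 < 2 * n := by omega
  have h_div : (2 * (b : ℕ) + 1) / 2 = b := by omega
  simp [sVec, h_lt, h_div]

lemma sVec_apply_last {n : ℕ} (g : Fin n → Ω₁ → ℝ) (W : Ω₁ × Ω₁ × Ω₂ → ℝ)
    (x : Ω₁ × Ω₁ × Ω₂) : sVec n g W x (Fin.last _) = W x := by
  simp [sVec]

def sVecCombination {n k : ℕ} (c : Fin n → Fin k → ℝ) : RE (2 * n + 1) →L[ℝ] RE (2 * k + 1) :=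
  LinearMap.toContinuousLinearMap
    { toFun := fun v => WithLp.toLp 2 fun i =>
        if h : (i : ℕ) < 2 * k then
          if (i : ℕ) % 2 = 0 then ∑ b, c b ⟨(i : ℕ) / 2, by omega⟩ * v ⟨2 * b, by omega⟩
          else ∑ b, c b ⟨(i : ℕ) / 2, by omega⟩ * v ⟨2 * b + 1, by omega⟩
        else v (Fin.last _)
      map_add' := fun v w => by
        ext i
        simp only [PiLp.add_apply, mul_add, Finset.sum_add_distrib]
        split_ifs <;> rfl
      map_smul' := fun a v => by
        ext i
        simp only [PiLp.smul_apply, smul_eq_mul, RingHom.id_apply]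
        split_ifs <;> simp only [Finset.mul_sum, mul_left_comm] }

lemma sVecCombination_sVec {n k : ℕ} (c : Fin n → Fin k → ℝ) (g : Fin n → Ω₁ → ℝ)
    (W : Ω₁ × Ω₁ × Ω₂ → ℝ) (x : Ω₁ × Ω₁ × Ω₂) :
    sVecCombination c (sVec n g W x) = sVec k (fun j y => ∑ b, c b j * g b y) W x := by
  ext i
  simp only [sVecCombination, LinearMap.coe_toContinuousLinearMap', LinearMap.coe_mk,
    AddHom.coe_mk, sVec_apply_even, sVec_apply_odd, sVec_apply_last]
  rw [sVec_apply]

lemma dist_sVec_le {k : ℕ} {f f' : Fin k → Ω₁ → ℝ} {c : ℝ} (hc : 0 ≤ c)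
    (h : ∀ j y, dist (f j y) (f' j y) ≤ c) (W : Ω₁ × Ω₁ × Ω₂ → ℝ) (x : Ω₁ × Ω₁ × Ω₂) :
    dist (sVec k f W x) (sVec k f' W x) ≤ √(2 * k + 1 : ℕ) * c := by
  refine (EuclideanSpace.dist_le_sqrt_card_mul hc fun i => ?_).trans_eq (by simp)
  rw [sVec_apply, sVec_apply]
  split_ifs
  · exact h _ _
  · exact h _ _
  · simpa using hc

end SVec

section SMeasure

variable {Ω₁ Ω₂ : Type*} [MeasurableSpace Ω₁] [MeasurableSpace Ω₂]

lemma measurable_sVec {k : ℕ} {f : Fin k → Ω₁ → ℝ} {W : Ω₁ × Ω₁ × Ω₂ → ℝ}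
    (hf : ∀ j, Measurable (f j)) (hW : Measurable W) : Measurable (sVec k f W) := by
  refine (WithLp.measurable_toLp 2 _).comp (measurable_pi_lambda _ fun i => ?_)
  by_cases hi : (i : ℕ) < 2 * k
  · by_cases hpar : (i : ℕ) % 2 = 0
    · simp only [hi, hpar, dite_true, if_true]
      exact (hf _).comp measurable_fst
    · simp only [hi, hpar, dite_true, if_false]
      exact (hf _).comp measurable_snd.fst
  · simpa [hi] using hW

lemma isProbabilityMeasure_Smeasure (P₁ : Measure Ω₁) (P₂ : Measure Ω₂) [IsProbabilityMeasure P₁]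
    [IsProbabilityMeasure P₂] {k : ℕ} {f : Fin k → Ω₁ → ℝ} {W : Ω₁ × Ω₁ × Ω₂ → ℝ}
    (hf : ∀ j, Measurable (f j)) (hW : Measurable W) :
    IsProbabilityMeasure (Smeasure P₁ P₂ f W) :=
  Measure.isProbabilityMeasure_map (measurable_sVec hf hW).aemeasurable

lemma Smeasure_sum_mul (P₁ : Measure Ω₁) (P₂ : Measure Ω₂) {n k : ℕ} (c : Fin n → Fin k → ℝ)
    {g : Fin n → Ω₁ → ℝ} {W : Ω₁ × Ω₁ × Ω₂ → ℝ} (hg : ∀ b, Measurable (g b))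
    (hW : Measurable W) :
    Smeasure P₁ P₂ (fun j y => ∑ b, c b j * g b y) W =
      (Smeasure P₁ P₂ g W).map (sVecCombination c) := by
  rw [Smeasure, Smeasure, Measure.map_map (sVecCombination c).continuous.measurable
    (measurable_sVec hg hW)]
  congr 1
  funext x
  exact (sVecCombination_sVec c g W x).symm

end SMeasure

section Grid

def gridPoint (m : ℕ) (a : Fin (m + 1)) : ℝ := -1 + 2 * a / m

/-- The clamp only matters outside `[-1, 1]`. -/
def gridIndex (m : ℕ) (t : ℝ) : Fin (m + 1) := Fin.clamp ⌊(t + 1) * m / 2⌋₊ m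

lemma gridPoint_mem_Icc (m : ℕ) (a : Fin (m + 1)) : gridPoint m a ∈ Icc (-1 : ℝ) 1 := by
  have ha : (a : ℝ) ≤ m := by exact_mod_cast Nat.lt_succ_iff.mp a.isLt
  have h_div : 2 * (a : ℝ) / m ≤ 2 :=
    div_le_of_le_mul₀ (Nat.cast_nonneg _) zero_le_two (by linarith)
  exact ⟨by unfold gridPoint; linarith [show 0 ≤ 2 * (a : ℝ) / m by positivity],
    by unfold gridPoint; linarith⟩

lemma measurable_gridIndex (m : ℕ) : Measurable (gridIndex m) :=
  (measurable_from_nat (f := fun n => Fin.clamp n m)).comp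
    (Nat.measurable_floor.comp (by fun_prop : Measurable fun t : ℝ => (t + 1) * m / 2))

lemma dist_gridPoint_gridIndex_le {m : ℕ} (hm : 0 < m) {t : ℝ} (ht : t ∈ Icc (-1 : ℝ) 1) :
    dist t (gridPoint m (gridIndex m t)) ≤ 2 / m := by
  obtain ⟨ht₁, ht₂⟩ := ht
  have hm' : (0 : ℝ) < m := by exact_mod_cast hm
  set s := (t + 1) * m / 2 with hs
  have hs₀ : 0 ≤ s := by rw [hs]; nlinarith
  have h_floor_le : ⌊s⌋₊ ≤ m := Nat.floor_le_of_le (by rw [hs]; nlinarith)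
  have h_index : ((gridIndex m t : ℕ) : ℝ) = ⌊s⌋₊ := by
    simp [gridIndex, Fin.clamp, ← hs, h_floor_le]
  have h_diff : t - gridPoint m (gridIndex m t) = 2 / m * (s - ⌊s⌋₊) := by
    rw [gridPoint, h_index, hs]
    field_simp
    ring
  rw [Real.dist_eq, h_diff, abs_of_nonneg (by have := Nat.floor_le hs₀; positivity)]
  have := Nat.lt_floor_add_one s
  calc 2 / m * (s - ⌊s⌋₊) ≤ 2 / m * 1 := by gcongr; linarith
    _ = 2 / m := mul_one _

end Grid

section Partition

variable {Ω : Type*} [MeasurableSpace Ω] {n : ℕ}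

lemma isFunctionPartition_ite_eq {q : Ω → Fin n} (hq : Measurable q) :
    IsFunctionPartition fun b y => if q y = b then (1 : ℝ) else 0 :=
  ⟨fun b => Measurable.ite (hq (measurableSet_singleton b)) measurable_const measurable_const,
    fun b y => by dsimp only; split_ifs <;> simp,
    fun y => by simp⟩

lemma IsFunctionPartition.sum_mul_mem_Icc {g : Fin n → Ω → ℝ} (hg : IsFunctionPartition g)
    {c : Fin n → ℝ} (hc : ∀ b, c b ∈ Icc (-1 : ℝ) 1) (y : Ω) :
    ∑ b, c b * g b y ∈ Icc (-1 : ℝ) 1 := by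
  obtain ⟨-, h01, hsum⟩ := hg
  simpa only [smul_eq_mul, mul_comm] using (convex_Icc (-1 : ℝ) 1).sum_mem
    (fun b _ => by rcases h01 b y with h | h <;> simp [h]) (hsum y) fun b _ => hc b

end Partition

section Profile

variable {Ω₁ Ω₂ : Type*} [MeasurableSpace Ω₁] [MeasurableSpace Ω₂]
  (P₁ : Measure Ω₁) (P₂ : Measure Ω₂) {W : Ω₁ × Ω₁ × Ω₂ → ℝ}

lemma map_sVecCombination_mem_SkSet {n k : ℕ} {c : Fin n → Fin k → ℝ}
    (hc : ∀ b j, c b j ∈ Icc (-1 : ℝ) 1) (hW : Measurable W) {ν : Measure (RE (2 * n + 1))}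
    (hν : ν ∈ SkSet' P₁ P₂ n W) : ν.map (sVecCombination c) ∈ SkSet P₁ P₂ k W := by
  obtain ⟨g, hg, rfl⟩ := hν
  exact ⟨_, fun j => Finset.measurable_sum _ fun b _ => (hg.1 b).const_mul _,
    fun j => hg.sum_mul_mem_Icc fun b => hc b j, (Smeasure_sum_mul P₁ P₂ c hg.1 hW).symm⟩

def gridCoeff (k m : ℕ) (b : Fin ((m + 1) ^ k)) (j : Fin k) : ℝ :=
  gridPoint m (finFunctionFinEquiv.symm b j)

lemma exists_mem_SkSet'_levyProkhorovEDist_le {k m : ℕ} (hm : 0 < m) (hW : Measurable W)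
    {μ : Measure (RE (2 * k + 1))} (hμ : μ ∈ SkSet P₁ P₂ k W) :
    ∃ μ' ∈ SkSet' P₁ P₂ ((m + 1) ^ k) W,
      levyProkhorovEDist μ (μ'.map (sVecCombination (gridCoeff k m))) ≤
        ENNReal.ofReal (√(2 * k + 1 : ℕ) * (2 / m)) := by
  obtain ⟨f, hf, hf_mem, rfl⟩ := hμ
  set cell : Ω₁ → Fin ((m + 1) ^ k) := fun y => finFunctionFinEquiv fun j => gridIndex m (f j y)
  have h_cell : Measurable cell :=
    (measurable_of_countable _).comp
      (measurable_pi_lambda _ fun j => (measurable_gridIndex m).comp (hf j))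
  set g : Fin ((m + 1) ^ k) → Ω₁ → ℝ := fun b y => if cell y = b then 1 else 0
  have hg : IsFunctionPartition g := isFunctionPartition_ite_eq h_cell
  refine ⟨Smeasure P₁ P₂ g W, ⟨g, hg, rfl⟩, ?_⟩
  rw [← Smeasure_sum_mul P₁ P₂ _ hg.1 hW]
  have h_round : (fun j y => ∑ b, gridCoeff k m b j * g b y) =
      fun j y => gridPoint m (gridIndex m (f j y)) := by
    funext j y
    simp only [g, mul_ite, mul_one, mul_zero, Finset.sum_ite_eq, Finset.mem_univ, if_true,
      gridCoeff, cell, Equiv.symm_apply_apply]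
  rw [h_round]
  have h_rounded_meas : ∀ j, Measurable fun y => gridPoint m (gridIndex m (f j y)) :=
    fun j => (measurable_of_countable (gridPoint m)).comp ((measurable_gridIndex m).comp (hf j))
  refine levyProkhorovEDist_map_le_of_edist_le _ (measurable_sVec hf hW)
    (measurable_sVec h_rounded_meas hW) fun x => ?_
  rw [edist_dist]
  exact ENNReal.ofReal_le_ofReal (dist_sVec_le (by positivity)
    (fun j y => dist_gridPoint_gridIndex_le hm (hf_mem j y)) W x)

end Profile

namespace PVar

lemma Sk'_nonempty (V : PVar) {n : ℕ} (hn : 0 < n) : (V.Sk' n).Nonempty :=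
  ⟨_, _, isFunctionPartition_ite_eq (measurable_const (a := (⟨0, hn⟩ : Fin n))), rfl⟩

lemma isProbabilityMeasure_of_mem_Sk' (V : PVar) {n : ℕ} {μ : Measure (RE (2 * n + 1))}
    (hμ : μ ∈ V.Sk' n) : IsProbabilityMeasure μ := by
  have := V.prob₁
  have := V.prob₂
  obtain ⟨g, hg, rfl⟩ := hμ
  exact isProbabilityMeasure_Smeasure _ _ hg.1 V.meas

lemma eHausLP_Sk'_ne_top (V U : PVar) {n : ℕ} (hn : 0 < n) :
    eHausLP (V.Sk' n) (U.Sk' n) ≠ ∞ :=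
  ((eHausLP_le_one (V.Sk'_nonempty hn) (U.Sk'_nonempty hn)
    (fun _ => V.isProbabilityMeasure_of_mem_Sk') (fun _ => U.isProbabilityMeasure_of_mem_Sk')).trans_lt
    ENNReal.one_lt_top).ne

lemma eHausLP_Sk_le (V U : PVar) {k m : ℕ} (hm : 0 < m) :
    eHausLP (V.Sk k) (U.Sk k) ≤ ENNReal.ofReal (√(2 * k + 1 : ℕ) * (2 / m)) +
      max 1 ‖sVecCombination (gridCoeff k m)‖₊ *
        eHausLP (V.Sk' ((m + 1) ^ k)) (U.Sk' ((m + 1) ^ k)) :=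
  eHausLP_le_of_map ((sVecCombination _).lipschitz.weaken (le_max_right _ _)) (le_max_left _ _)
    (fun _ => exists_mem_SkSet'_levyProkhorovEDist_le _ _ hm V.meas)
    (fun _ => exists_mem_SkSet'_levyProkhorovEDist_le _ _ hm U.meas)
    (fun _ => map_sVecCombination_mem_SkSet _ _ (fun _ _ => gridPoint_mem_Icc _ _) V.meas)
    (fun _ => map_sVecCombination_mem_SkSet _ _ (fun _ _ => gridPoint_mem_Icc _ _) U.meas)

end PVar

/-- For every `ε > 0` and integer `k ≥ 1` there exist `δ > 0` and an
integer `k' ≥ 1` such that any two P-variables `W, U` with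
`d_H(S'_{k'}(W), S'_{k'}(U)) ≤ δ` satisfy `d_H(S_k(W), S_k(U)) ≤ ε`. -/
theorem exists_kprime_delta_profiles :
    ∀ ε > (0 : ℝ), ∀ k : ℕ, 1 ≤ k → ∃ δ > (0 : ℝ), ∃ k' : ℕ, 1 ≤ k' ∧
      ∀ (W : PVar.{u₁, u₂}) (U : PVar.{u₃, u₄}),
        dHLP (W.Sk' k') (U.Sk' k') ≤ δ → dHLP (W.Sk k) (U.Sk k) ≤ ε := by
  intro ε hε k _
  obtain ⟨m, hm⟩ := exists_nat_gt (4 * √(2 * k + 1 : ℕ) / ε)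
  have hm₀ : (0 : ℝ) < m := lt_of_le_of_lt (by positivity) hm
  set L := max 1 ‖sVecCombination (gridCoeff k m)‖₊
  have hL : (0 : ℝ) < L := lt_of_lt_of_le one_pos (le_max_left _ _)
  refine ⟨ε / (2 * L), by positivity, (m + 1) ^ k, Nat.one_le_pow _ _ m.succ_pos,
    fun W U hWU => ENNReal.toReal_le_of_le_ofReal hε.le ?_⟩
  have h_Sk' : eHausLP (W.Sk' ((m + 1) ^ k)) (U.Sk' ((m + 1) ^ k)) ≤
      ENNReal.ofReal (ε / (2 * L)) :=
    (ENNReal.le_ofReal_iff_toReal_le (W.eHausLP_Sk'_ne_top U (by positivity))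
      (by positivity)).mpr hWU
  have h_round : √(2 * k + 1 : ℕ) * (2 / m) ≤ ε / 2 := by
    rw [div_lt_iff₀ hε] at hm
    rw [mul_div_assoc', div_le_div_iff₀ hm₀ two_pos]
    linarith
  calc eHausLP (W.Sk k) (U.Sk k)
      ≤ ENNReal.ofReal (√(2 * k + 1 : ℕ) * (2 / m)) + L * ENNReal.ofReal (ε / (2 * L)) :=
        (W.eHausLP_Sk_le U (Nat.cast_pos.mp hm₀)).trans (by gcongr)
    _ = ENNReal.ofReal (√(2 * k + 1 : ℕ) * (2 / m) + L * (ε / (2 * L))) := by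
        rw [ENNReal.ofReal_add (by positivity) (by positivity), ENNReal.ofReal_mul hL.le,
          ENNReal.ofReal_coe_nnreal]
    _ ≤ ENNReal.ofReal ε := by
        refine ENNReal.ofReal_le_ofReal ?_
        rw [show (L : ℝ) * (ε / (2 * L)) = ε / 2 by field_simp]
        linarith

end
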